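/- Let L_B(X) = Σ_{i=1}^k B_i ⊗ X_i be a linear pencil on K ⊗ E with each B_i positive semi-definite. If each X_i is sectorial with numerical range in S_α for a common α ∈ [0, π/2), then the numerical range of L_B(X), restricted to the subspace N⊥(Σ B_i) ⊗ E (the closure of the orthogonal complement of the kernel of Σ_{i=1}^k B_i, tensored with E), is contained in S_α. -/

import Mathlib

open scoped InnerProductSpace ComplexOrder
open Matrix

/-- The operator `B ⊗ X` acting on `ℂ^m ⊗ E ≅ (PiLp 2 fun _ : Fin m => E)`. -/
noncomputable def kronCLM {m : ℕ} {E : Type*} [NormedAddCommGroup E] [InnerProductSpace ℂ E]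
    [CompleteSpace E] (B : Matrix (Fin m) (Fin m) ℂ) (X : E →L[ℂ] E) :
    (PiLp 2 fun _ : Fin m => E) →L[ℂ] (PiLp 2 fun _ : Fin m => E) :=
  ((PiLp.continuousLinearEquiv 2 ℂ (fun _ : Fin m => E)).symm.toContinuousLinearMap).comp
    ((ContinuousLinearMap.pi
        (fun j => ∑ l, B j l • X.comp (ContinuousLinearMap.proj l))).comp
      (PiLp.continuousLinearEquiv 2 ℂ (fun _ : Fin m => E)).toContinuousLinearMap)

/-!
Factor each `Bᵢ = Cᵢᴴ Cᵢ`. Then `⟪(Bᵢ ⊗ Xᵢ) v, v⟫ = ∑ₚ ⟪Xᵢ uᵢₚ, uᵢₚ⟫` with `uᵢ = (Cᵢ ⊗ 1) v`,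
and each term lies in the closed sector, being `‖uᵢₚ‖²` times a point of the numerical range of
`Xᵢ`. If every `uᵢₚ` vanished, then `((∑ Bᵢ) ⊗ 1) v = 0`, which together with
`v ⊥ ker (∑ Bᵢ) ⊗ E` forces `v = 0`. So some term lies in the open sector, and hence so does the
sum.
-/

open scoped MatrixOrder in
lemma Matrix.PosSemidef.exists_eq_conjTranspose_mul_self {n 𝕜 : Type*} [Fintype n] [RCLike 𝕜]
    {B : Matrix n n 𝕜} (hB : B.PosSemidef) : ∃ C : Matrix n n 𝕜, B = Cᴴ * C := by
  classical
  exact CStarAlgebra.nonneg_iff_eq_star_mul_self.mp hB.nonneg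

section Kronecker

variable {m : ℕ} {E : Type*} [NormedAddCommGroup E] [InnerProductSpace ℂ E] [CompleteSpace E]

@[simp]
lemma kronCLM_apply (B : Matrix (Fin m) (Fin m) ℂ) (X : E →L[ℂ] E)
    (v : PiLp 2 fun _ : Fin m => E) (j : Fin m) :
    kronCLM B X v j = ∑ l, B j l • X (v l) := by
  simp [kronCLM]

lemma kronCLM_sum_left {ι : Type*} (s : Finset ι) (B : ι → Matrix (Fin m) (Fin m) ℂ)
    (X : E →L[ℂ] E) : kronCLM (∑ i ∈ s, B i) X = ∑ i ∈ s, kronCLM (B i) X := by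
  ext v j
  simp only [kronCLM_apply, Matrix.sum_apply, Finset.sum_smul, _root_.sum_apply, WithLp.ofLp_sum,
    Finset.sum_apply]
  exact Finset.sum_comm

lemma kronCLM_mul_kronCLM (A B : Matrix (Fin m) (Fin m) ℂ) (X Y : E →L[ℂ] E) :
    kronCLM A X * kronCLM B Y = kronCLM (A * B) (X * Y) := by
  ext v j
  simp only [mul_apply_eq_comp, kronCLM_apply, map_sum, map_smul, Finset.smul_sum, smul_smul,
    Matrix.mul_apply, Finset.sum_smul]
  exact Finset.sum_comm

lemma adjoint_kronCLM (A : Matrix (Fin m) (Fin m) ℂ) (X : E →L[ℂ] E) :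
    ContinuousLinearMap.adjoint (kronCLM A X) = kronCLM Aᴴ (ContinuousLinearMap.adjoint X) := by
  refine ((ContinuousLinearMap.eq_adjoint_iff _ _).2 fun v w => ?_).symm
  simp only [PiLp.inner_apply, kronCLM_apply, conjTranspose_apply, RCLike.star_def, sum_inner,
    inner_smul_left, RingHomCompTriple.comp_apply, RingHom.id_apply,
    ContinuousLinearMap.adjoint_inner_left, inner_sum, inner_smul_right]
  exact Finset.sum_comm

lemma kronCLM_matrix_mul_apply (A B : Matrix (Fin m) (Fin m) ℂ) (v : PiLp 2 fun _ : Fin m => E) :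
    kronCLM (A * B) 1 v = kronCLM A 1 (kronCLM B 1 v) := by
  rw [← mul_apply_eq_comp, kronCLM_mul_kronCLM, mul_one]

@[simp]
lemma kronCLM_one_left_apply (X : E →L[ℂ] E) (v : PiLp 2 fun _ : Fin m => E) (j : Fin m) :
    kronCLM 1 X v j = X (v j) := by
  simp [Matrix.one_apply]

lemma inner_kronCLM_conjTranspose_mul_self (C : Matrix (Fin m) (Fin m) ℂ) (X : E →L[ℂ] E)
    (v : PiLp 2 fun _ : Fin m => E) :
    ⟪kronCLM (Cᴴ * C) X v, v⟫_ℂ = ∑ p, ⟪X (kronCLM C 1 v p), kronCLM C 1 v p⟫_ℂ := by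
  have hfactor : kronCLM (Cᴴ * C) X =
      ContinuousLinearMap.adjoint (kronCLM C 1) * (kronCLM 1 X * kronCLM C 1) := by
    rw [adjoint_kronCLM, ContinuousLinearMap.adjoint_one, kronCLM_mul_kronCLM,
      kronCLM_mul_kronCLM, one_mul, one_mul, mul_one]
  rw [hfactor, mul_apply_eq_comp, ContinuousLinearMap.adjoint_inner_left, mul_apply_eq_comp,
    PiLp.inner_apply]
  simp only [kronCLM_one_left_apply]

lemma eq_zero_of_kronCLM_eq_zero {A : Matrix (Fin m) (Fin m) ℂ} {v : PiLp 2 fun _ : Fin m => E}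
    (hv : ∀ w : Fin m → ℂ, A *ᵥ w = 0 → ∑ j, starRingEnd ℂ (w j) • v j = 0)
    (hAv : kronCLM A 1 v = 0) : v = 0 := by
  ext p
  have hker : A *ᵥ (fun j => ⟪v p, v j⟫_ℂ) = 0 := by
    ext j
    simpa [mulVec, dotProduct, inner_sum, inner_smul_right] using
      congrArg (fun u => ⟪v p, u j⟫_ℂ) hAv
  -- test the orthogonality against the kernel vector `(⟪v p, v j⟫)ⱼ`
  have horth := congrArg (fun u => ⟪v p, u⟫_ℂ) (hv _ hker)
  simp only [inner_sum, inner_smul_right, inner_conj_symm, inner_zero_right] at horth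
  have hsq : ∀ j, ⟪v j, v p⟫_ℂ * ⟪v p, v j⟫_ℂ = ((‖⟪v p, v j⟫_ℂ‖ ^ 2 : ℝ) : ℂ) := fun j => by
    rw [← inner_conj_symm, Complex.conj_mul', Complex.ofReal_pow]
  simp only [hsq, ← Complex.ofReal_sum, Complex.ofReal_eq_zero] at horth
  have hdiag := (Finset.sum_eq_zero_iff_of_nonneg fun j _ => by positivity).1 horth p
    (Finset.mem_univ p)
  simpa using hdiag

end Kronecker

section Sector

def sector (α : ℝ) : Set ℂ := {z | 0 < z.re ∧ |z.im| ≤ z.re * Real.tan α}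

def closedSector (α : ℝ) : AddSubmonoid ℂ where
  carrier := {z | 0 ≤ z.re ∧ |z.im| ≤ z.re * Real.tan α}
  zero_mem' := by simp
  add_mem' := fun {a b} ⟨ha, ha'⟩ ⟨hb, hb'⟩ => by
    refine ⟨by simp only [Complex.add_re]; positivity, ?_⟩
    calc |(a + b).im| ≤ |a.im| + |b.im| := by rw [Complex.add_im]; exact abs_add_le _ _
      _ ≤ (a + b).re * Real.tan α := by rw [Complex.add_re, add_mul]; exact add_le_add ha' hb'

variable {α : ℝ}

lemma sector_subset_closedSector : sector α ⊆ closedSector α :=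
  fun _ hz => ⟨hz.1.le, hz.2⟩

lemma smul_mem_sector {r : ℝ} (hr : 0 < r) {z : ℂ} (hz : z ∈ sector α) : r • z ∈ sector α := by
  refine ⟨by simpa using mul_pos hr hz.1, ?_⟩
  simp only [Complex.smul_re, Complex.smul_im, smul_eq_mul, abs_mul, abs_of_pos hr, mul_assoc]
  exact mul_le_mul_of_nonneg_left hz.2 hr.le

lemma sum_mem_sector {ι : Type*} [Fintype ι] {w : ι → ℂ} (hw : ∀ i, w i ∈ closedSector α)
    {i₀ : ι} (hi₀ : w i₀ ∈ sector α) : ∑ i, w i ∈ sector α := by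
  refine ⟨?_, ((closedSector α).sum_mem fun i _ => hw i).2⟩
  rw [Complex.re_sum]
  exact Finset.sum_pos' (fun i _ => (hw i).1) ⟨i₀, Finset.mem_univ _, hi₀.1⟩

variable {E : Type*} [NormedAddCommGroup E] [InnerProductSpace ℂ E]

lemma inner_map_smul_self (X : E →L[ℂ] E) (c : ℂ) (x : E) :
    ⟪X (c • x), c • x⟫_ℂ = (‖c‖ ^ 2 : ℝ) • ⟪X x, x⟫_ℂ := by
  rw [map_smul, inner_smul_left, inner_smul_right, ← mul_assoc, Complex.conj_mul',
    Complex.real_smul, Complex.ofReal_pow]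

lemma inner_map_self_mem_sector {X : E →L[ℂ] E} (hX : ∀ x : E, ‖x‖ = 1 → ⟪X x, x⟫_ℂ ∈ sector α)
    {u : E} (hu : u ≠ 0) : ⟪X u, u⟫_ℂ ∈ sector α := by
  have hnorm : (0 : ℝ) < ‖u‖ := norm_pos_iff.2 hu
  have hunit : ‖(‖u‖⁻¹ : ℂ) • u‖ = 1 := by
    rw [norm_smul, norm_inv, Complex.norm_real, Real.norm_of_nonneg hnorm.le,
      inv_mul_cancel₀ hnorm.ne']
  have hscale : u = (‖u‖ : ℂ) • (‖u‖⁻¹ : ℂ) • u := by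
    rw [smul_smul, mul_inv_cancel₀ (by exact_mod_cast hnorm.ne'), one_smul]
  rw [hscale, inner_map_smul_self, Complex.norm_real, Real.norm_of_nonneg hnorm.le]
  exact smul_mem_sector (pow_pos hnorm 2) (hX _ hunit)

lemma inner_map_self_mem_closedSector {X : E →L[ℂ] E}
    (hX : ∀ x : E, ‖x‖ = 1 → ⟪X x, x⟫_ℂ ∈ sector α) (u : E) : ⟪X u, u⟫_ℂ ∈ closedSector α := by
  rcases eq_or_ne u 0 with rfl | hu
  · simp
  · exact sector_subset_closedSector (inner_map_self_mem_sector hX hu)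

end Sector

theorem pencil_sectorial_on_kernel_complement_general
    {E : Type*} [NormedAddCommGroup E] [InnerProductSpace ℂ E] [CompleteSpace E]
    (m k : ℕ) (B : Fin k → Matrix (Fin m) (Fin m) ℂ) (hB : ∀ i, (B i).PosSemidef)
    (X : Fin k → (E →L[ℂ] E))
    (α : ℝ)
    (hX : ∀ i, ∀ x : E, ‖x‖ = 1 →
      0 < (⟪X i x, x⟫_ℂ).re ∧ |(⟪X i x, x⟫_ℂ).im| ≤ (⟪X i x, x⟫_ℂ).re * Real.tan α) :
    ∀ v : PiLp 2 (fun _ : Fin m => E),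
      (∀ w : Fin m → ℂ, (∑ i, B i) *ᵥ w = 0 → ∑ j, (starRingEnd ℂ (w j)) • v j = 0) →
      ‖v‖ = 1 →
      0 < (⟪(∑ i, kronCLM (B i) (X i)) v, v⟫_ℂ).re ∧
      |(⟪(∑ i, kronCLM (B i) (X i)) v, v⟫_ℂ).im| ≤
        (⟪(∑ i, kronCLM (B i) (X i)) v, v⟫_ℂ).re * Real.tan α := by
  intro v hv hv1
  choose C hC using fun i => (hB i).exists_eq_conjTranspose_mul_self
  have hdecomp : ⟪(∑ i, kronCLM (B i) (X i)) v, v⟫_ℂ =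
      ∑ ip : Fin k × Fin m, ⟪X ip.1 (kronCLM (C ip.1) 1 v ip.2), kronCLM (C ip.1) 1 v ip.2⟫_ℂ := by
    rw [Fintype.sum_prod_type]
    simp only [_root_.sum_apply, sum_inner, hC, inner_kronCLM_conjTranspose_mul_self]
  obtain ⟨i, p, hip⟩ : ∃ i p, kronCLM (C i) 1 v p ≠ 0 := by
    by_contra! hCv
    have hBv : ∀ i, kronCLM (B i) 1 v = 0 := fun i => by
      rw [hC i, kronCLM_matrix_mul_apply, show kronCLM (C i) 1 v = 0 from PiLp.ext (hCv i),
        map_zero]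
    have hsum : kronCLM (∑ i, B i) 1 v = 0 := by
      simp only [kronCLM_sum_left, _root_.sum_apply, hBv, Finset.sum_const_zero]
    simp [eq_zero_of_kronCLM_eq_zero hv hsum] at hv1
  rw [hdecomp]
  exact sum_mem_sector (fun ip => inner_map_self_mem_closedSector (hX ip.1) _)
    (i₀ := (i, p)) (inner_map_self_mem_sector (hX i) hip)

/-- Let `L_B(X) = Σᵢ Bᵢ ⊗ Xᵢ` with each `Bᵢ` positive semi-definite. If each `Xᵢ` has
numerical range in the sector `S_α`, then the numerical range of `L_B(X)` restricted to
the subspace `N⊥(Σ Bᵢ) ⊗ E` (vectors orthogonal to `ker(Σ Bᵢ) ⊗ E`) is contained in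
`S_α`. -/
theorem pencil_sectorial_on_kernel_complement
    {E : Type*} [NormedAddCommGroup E] [InnerProductSpace ℂ E] [CompleteSpace E]
    (m k : ℕ) (B : Fin k → Matrix (Fin m) (Fin m) ℂ) (hB : ∀ i, (B i).PosSemidef)
    (X : Fin k → (E →L[ℂ] E))
    (α : ℝ) (hα0 : 0 ≤ α) (hα : α < Real.pi / 2)
    (hX : ∀ i, ∀ x : E, ‖x‖ = 1 →
      0 < (⟪X i x, x⟫_ℂ).re ∧ |(⟪X i x, x⟫_ℂ).im| ≤ (⟪X i x, x⟫_ℂ).re * Real.tan α) :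
    ∀ v : PiLp 2 (fun _ : Fin m => E),
      (∀ w : Fin m → ℂ, (∑ i, B i) *ᵥ w = 0 → ∑ j, (starRingEnd ℂ (w j)) • v j = 0) →
      ‖v‖ = 1 →
      0 < (⟪(∑ i, kronCLM (B i) (X i)) v, v⟫_ℂ).re ∧
      |(⟪(∑ i, kronCLM (B i) (X i)) v, v⟫_ℂ).im| ≤
        (⟪(∑ i, kronCLM (B i) (X i)) v, v⟫_ℂ).re * Real.tan α :=
  pencil_sectorial_on_kernel_complement_general m k B hB X α hX
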